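/- arXiv:2112.11164 — 5 statements merged into one kernel-verified Lean document; each statement's English description precedes it below -/
import Mathlib

section
/- Let G be a connected bipartite graph on n vertices with odd diameter D. Then the distance to H-palindromicity Z(G) = Σ_{k=0}^{⌊D/2⌋} |α(G,k) − α(G,D−k)| is at least ⌈n/2⌉. -/
/-!
Since `D` is odd, `(-1)^(D-k) = -(-1)^k`, so `Z(G)` dominates the alternating sum
`∑ⱼ (-1)^j α(G,j)`, which is `∑ₚ (-1)^d(p)` over all unordered pairs `p`. In a bipartite graph
two vertices on the same side are at even distance, so this sum is at least the number of
same-side pairs minus the number of the remaining pairs. With sides of sizes `a` and `b` this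
difference is `((a - b)^2 + n) / 2 ≥ n / 2`.
-/

open SimpleGraph Finset

noncomputable def pairDist {V : Type*} (G : SimpleGraph V) : Sym2 V → ℕ :=
  Sym2.lift ⟨fun x y => G.dist x y, fun x y => G.dist_comm⟩

/-- Number of unordered pairs of (not necessarily distinct) vertices at distance k. -/
noncomputable def alpha {V : Type*} [Fintype V] [DecidableEq V] (G : SimpleGraph V) (k : ℕ) : ℕ :=
  (Finset.univ.filter (fun p : Sym2 V => pairDist G p = k)).card

namespace SimpleGraph

variable {V : Type*} {G : SimpleGraph V} {A : Set V}

def coloringOfBipartition [DecidablePred (· ∈ A)]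
    (hbip : ∀ x y, G.Adj x y → (x ∈ A ↔ y ∉ A)) : G.Coloring Bool :=
  Coloring.mk (fun v => decide (v ∈ A)) fun {x y} h hxy => by
    have := hbip x y h
    rw [decide_eq_decide] at hxy
    tauto

theorem even_dist_of_mem_iff_mem (hbip : ∀ x y, G.Adj x y → (x ∈ A ↔ y ∉ A)) {x y : V}
    (hxy : x ∈ A ↔ y ∈ A) : Even (G.dist x y) := by
  classical
  by_cases h0 : G.dist x y = 0
  · simp [h0]
  obtain ⟨p, hp⟩ := exists_walk_of_dist_ne_zero h0
  rw [← hp, (coloringOfBipartition hbip).even_length_iff_congr]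
  change decide (x ∈ A) = true ↔ decide (y ∈ A) = true
  simpa only [decide_eq_true_iff] using hxy

end SimpleGraph

theorem even_pairDist_of_mem_sym2_union_sym2_compl {V : Type*} [Fintype V] [DecidableEq V]
    {G : SimpleGraph V} {s : Finset V} (hbip : ∀ x y, G.Adj x y → (x ∈ s ↔ y ∉ s))
    {p : Sym2 V} (hp : p ∈ s.sym2 ∪ sᶜ.sym2) : Even (pairDist G p) := by
  induction p using Sym2.ind with
  | _ x y =>
    refine even_dist_of_mem_iff_mem (A := (s : Set V)) hbip ?_
    simp only [mem_union, mk_mem_sym2_iff, mem_compl] at hp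
    simp only [mem_coe]
    tauto

theorem sum_range_mul_alpha {V : Type*} [Fintype V] [DecidableEq V] {G : SimpleGraph V}
    {D : ℕ} (hub : ∀ x y, G.dist x y ≤ D) {R : Type*} [CommSemiring R] (g : ℕ → R) :
    ∑ j ∈ range (D + 1), g j * alpha G j = ∑ p : Sym2 V, g (pairDist G p) := by
  have hmaps : ∀ p ∈ (univ : Finset (Sym2 V)), pairDist G p ∈ range (D + 1) := by
    intro p _
    induction p using Sym2.ind with
    | _ x y => exact mem_range.mpr (Nat.lt_succ_of_le (hub x y))
  rw [← sum_fiberwise_of_maps_to hmaps]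
  refine sum_congr rfl fun j _ => ?_
  rw [sum_congr rfl fun p hp => congrArg g (mem_filter.mp hp).2, sum_const, alpha,
    nsmul_eq_mul, mul_comm]

namespace Finset

theorem two_mul_card_sym2 {α : Type*} (s : Finset α) : 2 * #s.sym2 = #s * (#s + 1) := by
  rw [card_sym2, Nat.choose_two_right, Nat.add_sub_cancel, mul_comm (#s + 1),
    Nat.mul_div_cancel' (Nat.even_mul_succ_self _).two_dvd]

theorem four_mul_card_sym2_union_sym2_compl {α : Type*} [Fintype α] [DecidableEq α]
    (s : Finset α) :
    4 * (#(s.sym2 ∪ sᶜ.sym2) : ℤ)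
      = 2 * Fintype.card (Sym2 α) + (#s - #sᶜ) ^ 2 + Fintype.card α := by
  have hdisj : Disjoint s.sym2 sᶜ.sym2 := by
    rw [disjoint_left]
    intro p hs hsc
    induction p using Sym2.ind with
    | _ x y => exact mem_compl.mp (mk_mem_sym2_iff.mp hsc).1 (mk_mem_sym2_iff.mp hs).1
  have hs := two_mul_card_sym2 s
  have hsc := two_mul_card_sym2 sᶜ
  have huniv := two_mul_card_sym2 (univ : Finset α)
  rw [sym2_univ, card_univ, card_univ] at huniv
  have hcompl := card_add_card_compl s
  rw [card_union_of_disjoint hdisj]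
  push_cast
  zify at hs hsc huniv hcompl
  rw [← hcompl] at huniv ⊢
  linear_combination 2 * hs + 2 * hsc - huniv

theorem sum_range_two_mul_add_two {M : Type*} [AddCommMonoid M] (g : ℕ → M) (m : ℕ) :
    ∑ j ∈ range (2 * m + 2), g j = ∑ k ∈ range (m + 1), (g k + g (2 * m + 1 - k)) := by
  rw [show 2 * m + 2 = (m + 1) + (m + 1) by ring, sum_range_add, sum_add_distrib,
    ← sum_range_reflect (fun j => g (m + 1 + j))]
  refine congrArg _ (sum_congr rfl fun k hk => congrArg g ?_)
  have := mem_range.mp hk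
  omega

theorem sum_range_neg_one_pow_mul_le_sum_abs_sub {D : ℕ} (hD : Odd D) (f : ℕ → ℤ) :
    ∑ j ∈ range (D + 1), (-1) ^ j * f j ≤ ∑ k ∈ range (D / 2 + 1), |f k - f (D - k)| := by
  obtain ⟨m, rfl⟩ := hD
  rw [sum_range_two_mul_add_two, show (2 * m + 1) / 2 = m by omega]
  refine sum_le_sum fun k hk => ?_
  have hk : k ≤ 2 * m + 1 := by have := mem_range.mp hk; omega
  rcases Nat.even_or_odd k with he | ho
  · rw [he.neg_one_pow, (Nat.Odd.sub_even hk (odd_two_mul_add_one m) he).neg_one_pow]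
    linarith [le_abs_self (f k - f (2 * m + 1 - k))]
  · rw [ho.neg_one_pow, (Nat.Odd.sub_odd (odd_two_mul_add_one m) ho).neg_one_pow]
    linarith [neg_abs_le (f k - f (2 * m + 1 - k))]

theorem two_mul_card_sub_card_le_sum_neg_one_pow {ι : Type*} [DecidableEq ι] {s t : Finset ι}
    (hst : s ⊆ t) {f : ι → ℕ} (heven : ∀ i ∈ s, Even (f i)) :
    2 * (#s : ℤ) - #t ≤ ∑ i ∈ t, (-1) ^ f i := by
  have hcard := card_sdiff_add_card_eq_card hst
  have hrest : #(t \ s) • (-1 : ℤ) ≤ ∑ i ∈ t \ s, (-1) ^ f i :=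
    card_nsmul_le_sum _ _ _ fun i _ => by rcases neg_one_pow_eq_or ℤ (f i) with h | h <;> simp [h]
  rw [← sum_sdiff hst, sum_congr rfl fun i hi => (heven i hi).neg_one_pow, sum_const]
  simp only [smul_neg, nsmul_eq_mul, mul_one] at hrest ⊢
  zify at hcard
  linarith

end Finset

theorem stmt3_general {V : Type*} [Fintype V] [DecidableEq V] (G : SimpleGraph V)
    (A : Set V)
    (hbip : ∀ x y, G.Adj x y → (x ∈ A ↔ y ∉ A))
    (D : ℕ) (hodd : Odd D)
    (hub : ∀ x y, G.dist x y ≤ D) :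
    (Fintype.card V + 1) / 2 ≤
      ∑ k ∈ Finset.range (D / 2 + 1),
        ((alpha G k : ℤ) - (alpha G (D - k) : ℤ)).natAbs := by
  classical
  set s := A.toFinset
  have hbip' : ∀ x y, G.Adj x y → (x ∈ s ↔ y ∉ s) := by simpa [s] using hbip
  have hsigned := two_mul_card_sub_card_le_sum_neg_one_pow (subset_univ (s.sym2 ∪ sᶜ.sym2))
    fun p hp => even_pairDist_of_mem_sym2_union_sym2_compl hbip' hp
  rw [← sum_range_mul_alpha hub, card_univ] at hsigned
  have hfold := sum_range_neg_one_pow_mul_le_sum_abs_sub hodd fun k => (alpha G k : ℤ)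
  have hcount := four_mul_card_sym2_union_sym2_compl s
  suffices Fintype.card V ≤ 2 * ∑ k ∈ range (D / 2 + 1),
      ((alpha G k : ℤ) - (alpha G (D - k) : ℤ)).natAbs by omega
  zify
  linarith [sq_nonneg ((#s : ℤ) - #sᶜ)]

/-- For a connected bipartite graph on n vertices of odd diameter D,
the distance to H-palindromicity is at least ⌈n/2⌉. -/
theorem stmt3 {V : Type*} [Fintype V] [DecidableEq V] (G : SimpleGraph V)
    (hG : G.Connected) (A : Set V)
    (hbip : ∀ x y, G.Adj x y → (x ∈ A ↔ y ∉ A))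
    (D : ℕ) (hodd : Odd D)
    (hub : ∀ x y, G.dist x y ≤ D) (hex : ∃ x y, G.dist x y = D) :
    (Fintype.card V + 1) / 2 ≤
      ∑ k ∈ Finset.range (D / 2 + 1),
        ((alpha G k : ℤ) - (alpha G (D - k) : ℤ)).natAbs :=
  stmt3_general G A hbip D hodd hub
end

section
/- There is no tree of odd diameter D such that α(T,k) = α(T,D−k) for all k = 0, 1, ..., ⌊D/2⌋. -/
open SimpleGraph Finset

section Aux

variable {V : Type*} [DecidableEq V] {G : SimpleGraph V}

lemma path_length_eq_dist (hT : G.IsTree) {x y : V} (p : G.Walk x y) (hp : p.IsPath) :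
    p.length = G.dist x y := by
  obtain ⟨w, hw⟩ := (hT.isConnected.preconnected x y).exists_walk_length_eq_dist
  have h1 : p = w.bypass := by
    have := hT.IsAcyclic.path_unique ⟨p, hp⟩ ⟨w.bypass, w.bypass_isPath⟩
    exact congrArg Subtype.val this
  have h2 := w.length_bypass_le
  have h3 := SimpleGraph.dist_le p
  have h4 := congrArg SimpleGraph.Walk.length h1
  omega

lemma adj_dist_ne (hT : G.IsTree) {x y : V} (h : G.Adj x y) (z : V) :
    G.dist x z ≠ G.dist y z := by
  intro hd
  obtain ⟨q, hq⟩ := (hT.isConnected.preconnected y z).exists_walk_length_eq_dist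
  set p := q.bypass with hpdef
  have hpath : p.IsPath := q.bypass_isPath
  have hlen : p.length = G.dist y z := path_length_eq_dist hT p hpath
  by_cases hx : x ∈ p.support
  · have h2 : (p.dropUntil x hx).IsPath := hpath.dropUntil hx
    have h3 : (p.dropUntil x hx).length = G.dist x z := path_length_eq_dist hT _ h2
    have h4 : (p.takeUntil x hx).length + (p.dropUntil x hx).length = p.length := by
      rw [← SimpleGraph.Walk.length_append, SimpleGraph.Walk.take_spec]
    have h5 : (p.takeUntil x hx).length ≠ 0 := by
      intro h0
      exact h.ne' (SimpleGraph.Walk.eq_of_length_eq_zero h0)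
    omega
  · have hc : (SimpleGraph.Walk.cons h p).IsPath := hpath.cons hx
    have := path_length_eq_dist hT _ hc
    rw [SimpleGraph.Walk.length_cons] at this
    omega

lemma negOnePow_mod (m : ℕ) : (-1 : ℤ) ^ m = (-1) ^ (m % 2) := by
  conv_lhs => rw [← Nat.div_add_mod m 2]
  rw [pow_add, pow_mul]
  norm_num

lemma negOnePow_congr {m n : ℕ} (h : m % 2 = n % 2) : (-1 : ℤ) ^ m = (-1 : ℤ) ^ n := by
  rw [negOnePow_mod m, negOnePow_mod n, h]

lemma walk_parity (hT : G.IsTree) (r : V) {x y : V} (p : G.Walk x y) :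
    (p.length + G.dist r x + G.dist r y) % 2 = 0 := by
  induction p with
  | nil => simp [SimpleGraph.Walk.length_nil]; omega
  | @cons x u y h q ih =>
    have hne := adj_dist_ne hT h r
    have e1 : G.dist x r ≤ G.dist u r + 1 := by
      have t := hT.isConnected.dist_triangle (u := x) (v := u) (w := r)
      have d1 : G.dist x u ≤ 1 := by
        simpa using SimpleGraph.dist_le (SimpleGraph.Walk.cons h SimpleGraph.Walk.nil)
      omega
    have e2 : G.dist u r ≤ G.dist x r + 1 := by
      have t := hT.isConnected.dist_triangle (u := u) (v := x) (w := r)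
      have d1 : G.dist u x ≤ 1 := by
        simpa using SimpleGraph.dist_le (SimpleGraph.Walk.cons h.symm SimpleGraph.Walk.nil)
      omega
    rw [SimpleGraph.dist_comm (u := x) (v := r)] at e1 e2 hne
    rw [SimpleGraph.dist_comm (u := u) (v := r)] at e1 e2 hne
    rw [SimpleGraph.Walk.length_cons]
    omega

lemma dist_parity (hT : G.IsTree) (r x y : V) :
    (G.dist x y + G.dist r x + G.dist r y) % 2 = 0 := by
  obtain ⟨w, hw⟩ := (hT.isConnected.preconnected x y).exists_walk_length_eq_dist
  have := walk_parity hT r w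
  omega

lemma sym2_fiber_card [Fintype V] (a b : V) :
    (univ.filter (fun xy : V × V => s(xy.1, xy.2) = s(a, b))).card =
      if a = b then 1 else 2 := by
  split_ifs with hab
  · subst hab
    have : univ.filter (fun xy : V × V => s(xy.1, xy.2) = s(a, a)) = {(a, a)} := by
      ext ⟨x, y⟩
      simp only [mem_filter, mem_univ, true_and, Sym2.eq_iff, mem_singleton, Prod.ext_iff]
      tauto
    rw [this]; simp
  · have : univ.filter (fun xy : V × V => s(xy.1, xy.2) = s(a, b)) = {(a, b), (b, a)} := by
      ext ⟨x, y⟩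
      simp [Sym2.eq_iff, Prod.ext_iff]
    rw [this]
    rw [card_insert_of_notMem (by simp [Prod.ext_iff]; tauto), card_singleton]

lemma two_mul_sym2_sum [Fintype V] (f : Sym2 V → ℤ) :
    2 * ∑ p : Sym2 V, f p = (∑ xy : V × V, f s(xy.1, xy.2)) + ∑ x : V, f s(x, x) := by
  have h1 : ∑ xy : V × V, f s(xy.1, xy.2)
      = ∑ p : Sym2 V, ∑ xy ∈ univ.filter (fun xy : V × V => s(xy.1, xy.2) = p),
          f s(xy.1, xy.2) :=
    (Finset.sum_fiberwise_of_maps_to (fun x _ => mem_univ _) _).symm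
  have h2 : ∀ p : Sym2 V, ∑ xy ∈ univ.filter (fun xy : V × V => s(xy.1, xy.2) = p),
      f s(xy.1, xy.2) = (if p.IsDiag then 1 else 2) * f p := by
    intro p
    induction p with
    | _ a b =>
      rw [Finset.sum_congr rfl (fun xy hxy => by
        rw [(Finset.mem_filter.mp hxy).2]), Finset.sum_const, sym2_fiber_card]
      by_cases hab : a = b <;> simp [hab, Sym2.mk_isDiag_iff, two_mul, nsmul_eq_mul]
  have h3 : ∑ x : V, f s(x, x) = ∑ p ∈ univ.filter (fun p : Sym2 V => p.IsDiag), f p := by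
    refine Finset.sum_bij (fun x _ => s(x, x)) ?_ ?_ ?_ ?_
    · intro x _; simp
    · intro x _ y _ h; exact Sym2.diag_injective h
    · intro p hp
      obtain ⟨a, ha⟩ : ∃ a, Sym2.diag a = p := ⟨_, Sym2.diag_diagElem (Finset.mem_filter.mp hp).2⟩
      exact ⟨a, mem_univ a, ha⟩
    · intro x _; rfl
  rw [h1, Finset.sum_congr rfl (fun p _ => h2 p), h3,
    ← Finset.sum_filter_add_sum_filter_not univ (fun p : Sym2 V => p.IsDiag)
      (fun p => (if p.IsDiag then (1:ℤ) else 2) * f p),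
    ← Finset.sum_filter_add_sum_filter_not univ (fun p : Sym2 V => p.IsDiag) f]
  have e1 : ∀ p ∈ univ.filter (fun p : Sym2 V => p.IsDiag),
      (if p.IsDiag then (1:ℤ) else 2) * f p = f p := by
    intro p hp; simp [(Finset.mem_filter.mp hp).2]
  have e2 : ∀ p ∈ univ.filter (fun p : Sym2 V => ¬p.IsDiag),
      (if p.IsDiag then (1:ℤ) else 2) * f p = 2 * f p := by
    intro p hp; simp [(Finset.mem_filter.mp hp).2]
  rw [Finset.sum_congr rfl e1, Finset.sum_congr rfl e2]
  rw [← Finset.mul_sum]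
  ring

end Aux

lemma alpha_eq {V : Type*} [Fintype V] [DecidableEq V] (G : SimpleGraph V) (k : ℕ) :
    alpha G k = (Finset.univ.filter (fun p : Sym2 V => pairDist G p = k)).card := rfl

/-- There is no H-palindromic tree of odd diameter. -/
theorem stmt4 {V : Type*} [Fintype V] [DecidableEq V] (G : SimpleGraph V)
    (hT : G.IsTree) (D : ℕ) (hodd : Odd D)
    (hub : ∀ x y, G.dist x y ≤ D) (hex : ∃ x y, G.dist x y = D) :
    ¬ (∀ k ≤ D / 2, alpha G k = alpha G (D - k)) := by
  intro hpal
  obtain ⟨m, hm⟩ := hodd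
  have hne : Nonempty V := hT.isConnected.nonempty
  obtain ⟨r⟩ := hne
  have hpd : ∀ x y : V, pairDist G s(x, y) = G.dist x y := fun x y => rfl
  set ε : V → ℤ := fun v => (-1) ^ (G.dist r v) with hε
  have key : ∀ x y : V, (-1 : ℤ) ^ (G.dist x y) = ε x * ε y := by
    intro x y
    rw [hε]
    dsimp only
    rw [← pow_add]
    refine negOnePow_congr ?_
    have := dist_parity hT r x y
    omega
  set S : ℤ := ∑ p : Sym2 V, (-1 : ℤ) ^ (pairDist G p) with hS
  have hdouble : 2 * S = (∑ v : V, ε v) ^ 2 + (Fintype.card V : ℤ) := by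
    rw [hS, two_mul_sym2_sum]
    congr 1
    · rw [sq, Finset.sum_mul_sum, Fintype.sum_prod_type]
      refine Finset.sum_congr rfl fun x _ => Finset.sum_congr rfl fun y _ => ?_
      rw [hpd, key]
    · simp [hpd, SimpleGraph.dist_self]
  -- S as alternating sum of alpha
  have hmaps : ∀ p ∈ (univ : Finset (Sym2 V)), pairDist G p ∈ Finset.range (D + 1) := by
    intro p _
    induction p with
    | _ x y =>
      rw [hpd, Finset.mem_range]
      exact Nat.lt_succ_of_le (hub x y)
  have hfib := Finset.sum_fiberwise_of_maps_to hmaps (fun p => (-1 : ℤ) ^ (pairDist G p))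
  have hinner : ∀ k, ∑ p ∈ univ.filter (fun p : Sym2 V => pairDist G p = k),
      (-1 : ℤ) ^ (pairDist G p) = (-1 : ℤ) ^ k * (alpha G k : ℤ) := by
    intro k
    rw [Finset.sum_congr rfl (fun p hp => by rw [(Finset.mem_filter.mp hp).2]),
      Finset.sum_const, alpha_eq, nsmul_eq_mul, mul_comm]
  have hSsum : S = ∑ k ∈ Finset.range (D + 1), (-1 : ℤ) ^ k * (alpha G k : ℤ) := by
    rw [hS, ← hfib]
    exact Finset.sum_congr rfl fun k _ => hinner k
  -- palindromicity for all k ≤ D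
  have halpha : ∀ k ≤ D, alpha G (D - k) = alpha G k := by
    intro k hk
    rcases le_or_gt k (D / 2) with h | h
    · exact (hpal k h).symm
    · have h1 : D - k ≤ D / 2 := by omega
      have := hpal (D - k) h1
      rwa [Nat.sub_sub_self hk] at this
  have hrefl := Finset.sum_range_reflect (fun k => (-1 : ℤ) ^ k * (alpha G k : ℤ)) (D + 1)
  have hneg : ∑ k ∈ Finset.range (D + 1),
      (fun k => (-1 : ℤ) ^ k * (alpha G k : ℤ)) (D + 1 - 1 - k)
      = -∑ k ∈ Finset.range (D + 1), (-1 : ℤ) ^ k * (alpha G k : ℤ) := by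
    rw [← Finset.sum_neg_distrib]
    refine Finset.sum_congr rfl fun k hk => ?_
    have hkD : k ≤ D := by
      have := Finset.mem_range.mp hk; omega
    have h1 : D + 1 - 1 - k = D - k := by omega
    rw [h1]
    dsimp only
    rw [halpha k hkD]
    have h2 : (-1 : ℤ) ^ (D - k) = -(-1 : ℤ) ^ k := by
      have h3 : (-1 : ℤ) ^ (D - k) = (-1 : ℤ) ^ (k + 1) := by
        refine negOnePow_congr ?_
        omega
      rw [h3, pow_succ]
      ring
    rw [h2]
    ring
  have hS0 : S = 0 := by
    have hA : (∑ k ∈ Finset.range (D + 1), (-1 : ℤ) ^ k * (alpha G k : ℤ))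
        = -∑ k ∈ Finset.range (D + 1), (-1 : ℤ) ^ k * (alpha G k : ℤ) := by
      exact hrefl.symm.trans hneg
    rw [hSsum]
    omega
  rw [hS0] at hdouble
  have h4 : (0 : ℤ) ≤ (∑ v : V, ε v) ^ 2 := sq_nonneg _
  have h5 : 0 < Fintype.card V := Fintype.card_pos_iff.mpr ⟨r⟩
  have h6 : (1 : ℤ) ≤ (Fintype.card V : ℤ) := by exact_mod_cast h5
  linarith
end

section
/- Define sequences by x₀ = 2, y₀ = 7, x_{n+1} = 3x_n + 4y_n, y_{n+1} = 2x_n + 3y_n, and set a_n = x_n + (3y_n + 3)/2 and b_n = (y_n + 3)/2. Then for all n, a_n and b_n are positive integers, a_n + b_n is odd, and a_n + b_n ≥ 19. -/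
/-! Induction shows that `xₙ` stays even and `yₙ` odd, and that both sequences never drop below
their initial values. Writing `xₙ = 2u` and `yₙ = 2v + 1` gives `aₙ = 2u + 3v + 3` and
`bₙ = v + 2`, so `aₙ + bₙ = 2(u + 2v + 2) + 1`, and `u ≥ 1`, `v ≥ 3` give `aₙ + bₙ ≥ 19`. -/

section Recurrence

variable {x y : ℕ → ℤ} (hx : ∀ n, x (n + 1) = 3 * x n + 4 * y n)
  (hy : ∀ n, y (n + 1) = 2 * x n + 3 * y n)

include hx hy

theorem even_odd_of_recurrence (hx0 : Even (x 0)) (hy0 : Odd (y 0)) :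
    ∀ n, Even (x n) ∧ Odd (y n) := by
  intro n
  induction n with
  | zero => exact ⟨hx0, hy0⟩
  | succ n ih =>
    obtain ⟨⟨u, hu⟩, ⟨v, hv⟩⟩ := ih
    rw [hx n, hy n]
    exact ⟨⟨3 * u + 2 * y n, by omega⟩, ⟨x n + 3 * v + 1, by omega⟩⟩

theorem initial_le_of_recurrence (hx0 : 0 ≤ x 0) (hy0 : 0 ≤ y 0) :
    ∀ n, x 0 ≤ x n ∧ y 0 ≤ y n := by
  intro n
  induction n with
  | zero => exact ⟨le_rfl, le_rfl⟩
  | succ n ih =>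
    rw [hx n, hy n]
    omega

end Recurrence

/-- With xₙ, yₙ as in the recurrence, aₙ = xₙ + (3yₙ + 3)/2 and bₙ = (yₙ + 3)/2
are positive integers, aₙ + bₙ is odd, and aₙ + bₙ ≥ 19. -/
theorem stmt11 (x y : ℕ → ℤ) (hx0 : x 0 = 2) (hy0 : y 0 = 7)
    (hx : ∀ n, x (n + 1) = 3 * x n + 4 * y n)
    (hy : ∀ n, y (n + 1) = 2 * x n + 3 * y n) :
    ∀ n, ∃ a b : ℤ, 2 * a = 2 * x n + 3 * y n + 3 ∧ 2 * b = y n + 3 ∧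
      0 < a ∧ 0 < b ∧ Odd (a + b) ∧ 19 ≤ a + b := by
  intro n
  obtain ⟨⟨u, hu⟩, ⟨v, hv⟩⟩ :=
    even_odd_of_recurrence hx hy (by rw [hx0]; decide) (by rw [hy0]; decide) n
  obtain ⟨hxn, hyn⟩ := initial_le_of_recurrence hx hy (by omega) (by omega) n
  exact ⟨x n + 3 * v + 3, v + 2, by omega, by omega, by omega, by omega,
    ⟨u + 2 * v + 2, by omega⟩, by omega⟩
end

section
/- Suppose nonnegative integers a, b, s, t satisfy s = t + 3 = (a + b − 5)/2 and (a − 3b + 3)² − 2(2b − 3)² + 94 = 0. Then α₀ = α₆, α₁ = α₅, and α₂ = α₄, where α₀ = a+b+s+t+8, α₁ = a+b+s+t+7, α₂ = C(a+1,2) + C(b+1,2) + C(s+3,2) + C(t+2,2) + 4, α₄ = (s+2) + (a+b+2)(t+1) + ab, α₅ = a + b + 2(s+2), α₆ = 2(a+b). -/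
/-!
With `s = t + 3`, the equalities `α₀ = α₆` and `α₁ = α₅` both say `a + b = 2t + 11`.
On that line `4 (α₂ - α₄)` is exactly the Pell-type expression `(a - 3b + 3)² - 2(2b - 3)² + 94`,
so its vanishing is equivalent to `α₂ = α₄`.
-/

theorem alpha_two_sub_alpha_four_eq (a b t : ℚ) (hab : a + b = 2 * t + 11) :
    (a + 1) * a / 2 + (b + 1) * b / 2 + (t + 6) * (t + 5) / 2 + (t + 2) * (t + 1) / 2 + 4
        - ((t + 5) + (a + b + 2) * (t + 1) + a * b)
      = ((a - 3 * b + 3) ^ 2 - 2 * (2 * b - 3) ^ 2 + 94) / 4 := by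
  linear_combination (a + b - 2 * t + 3) / 4 * hab

/-- If s = t + 3 = (a+b−5)/2 and (a−3b+3)² − 2(2b−3)² + 94 = 0, then
α₀ = α₆, α₁ = α₅ and α₂ = α₄ for the tree T(a,b,s,t). -/
theorem stmt12 (a b s t : ℕ) (hst : s = t + 3) (hs : 2 * s + 5 = a + b)
    (hpell : ((a : ℤ) - 3 * b + 3) ^ 2 - 2 * (2 * (b : ℤ) - 3) ^ 2 + 94 = 0) :
    (a + b + s + t + 8 = 2 * (a + b)) ∧
    (a + b + s + t + 7 = a + b + 2 * (s + 2)) ∧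
    ((a + 1).choose 2 + (b + 1).choose 2 + (s + 3).choose 2 + (t + 2).choose 2 + 4
      = (s + 2) + (a + b + 2) * (t + 1) + a * b) := by
  refine ⟨by omega, by omega, ?_⟩
  subst hst
  have hab : (a : ℚ) + b = 2 * t + 11 := by exact_mod_cast (by omega : a + b = 2 * t + 11)
  have hpellℚ : ((a : ℚ) - 3 * b + 3) ^ 2 - 2 * (2 * (b : ℚ) - 3) ^ 2 + 94 = 0 := by
    exact_mod_cast hpell
  apply Nat.cast_injective (R := ℚ)
  push_cast [Nat.cast_choose_two]
  linear_combination alpha_two_sub_alpha_four_eq a b t hab + hpellℚ / 4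
end

section
/- In any connected bipartite graph of odd diameter D on n vertices, Σ_{k even} α(G,k) − Σ_{k odd} α(G,k) ≥ n/2, where the sums range over 0 ≤ k ≤ D and α(G,0) = n. -/
open SimpleGraph Finset

/-!
Let `a` and `b` be the sizes of the two colour classes, `n = a + b`. Distances are even exactly
between vertices of the same class, so the pairs at even distance are the `C(a+1,2) + C(b+1,2)`
pairs inside a class and the remaining `ab` pairs are at odd distance. The difference is
`((a - b)^2 + a + b) / 2 ≥ n / 2`.
-/

namespace SimpleGraph

variable {V : Type*} {G : SimpleGraph V} {A : Set V}

theorem Walk.even_length_iff_of_bipartite (hbip : ∀ x y, G.Adj x y → (x ∈ A ↔ y ∉ A))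
    {x y : V} (p : G.Walk x y) : Even p.length ↔ (x ∈ A ↔ y ∈ A) := by
  induction p with
  | nil => simp
  | cons h p ih =>
    have := hbip _ _ h
    simp only [Walk.length_cons, Nat.even_add_one, ih]
    tauto

theorem Connected.even_dist_iff_of_bipartite (hG : G.Connected)
    (hbip : ∀ x y, G.Adj x y → (x ∈ A ↔ y ∉ A)) (x y : V) :
    Even (G.dist x y) ↔ (x ∈ A ↔ y ∈ A) := by
  obtain ⟨p, hp⟩ := hG.exists_walk_length_eq_dist x y
  exact hp ▸ p.even_length_iff_of_bipartite hbip

end SimpleGraph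

theorem Finset.disjoint_sym2_of_disjoint {α : Type*} {s t : Finset α} (h : Disjoint s t) :
    Disjoint s.sym2 t.sym2 := by
  rw [Finset.disjoint_left]
  intro p hs ht
  induction p using Sym2.ind with
  | _ x y =>
    rw [mk_mem_sym2_iff] at hs ht
    exact Finset.disjoint_left.mp h hs.1 ht.1

section PairCounts

variable {V : Type*} [Fintype V] [DecidableEq V] {G : SimpleGraph V}

theorem sum_alpha_filter_eq_card_filter {D : ℕ} (hub : ∀ x y, G.dist x y ≤ D)
    (P : ℕ → Prop) [DecidablePred P] :
    ∑ k ∈ (range (D + 1)).filter P, alpha G k = #{p : Sym2 V | P (pairDist G p)} := by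
  rw [card_eq_sum_card_fiberwise (f := pairDist G) (t := (range (D + 1)).filter P)]
  · refine sum_congr rfl fun k hk => ?_
    rw [alpha, filter_filter]
    exact congrArg card <| filter_congr fun p _ =>
      ⟨fun h => ⟨h ▸ (mem_filter.mp hk).2, h⟩, And.right⟩
  · intro p hp
    have hle : pairDist G p ≤ D := Sym2.ind (f := fun p => pairDist G p ≤ D) hub p
    exact mem_filter.mpr ⟨mem_range.mpr (Nat.lt_succ_of_le hle), (mem_filter.mp hp).2⟩

theorem filter_even_pairDist_eq_sym2_union (hG : G.Connected) {A : Set V} [DecidablePred (· ∈ A)]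
    (hbip : ∀ x y, G.Adj x y → (x ∈ A ↔ y ∉ A)) :
    ({p | Even (pairDist G p)} : Finset (Sym2 V)) = A.toFinset.sym2 ∪ A.toFinsetᶜ.sym2 := by
  ext p
  induction p using Sym2.ind with
  | _ x y =>
    have hpar := hG.even_dist_iff_of_bipartite hbip x y
    rw [mem_filter]
    simp only [pairDist, Sym2.lift_mk, mem_univ, true_and, mem_union,
      mk_mem_sym2_iff, mem_compl, Set.mem_toFinset] at hpar ⊢
    tauto

end PairCounts

theorem add_div_two_le_two_mul_choose_add_choose_sub_choose (a b : ℕ) :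
    ((a + b : ℕ) : ℚ) / 2 ≤
      2 * ((a + 1).choose 2 + (b + 1).choose 2 : ℕ) - ((a + b + 1).choose 2 : ℕ) := by
  push_cast [Nat.cast_choose_two]
  nlinarith [sq_nonneg ((a : ℚ) - b)]

theorem stmt18_general {V : Type*} [Fintype V] [DecidableEq V] (G : SimpleGraph V)
    (hG : G.Connected) (A : Set V)
    (hbip : ∀ x y, G.Adj x y → (x ∈ A ↔ y ∉ A))
    (D : ℕ)
    (hub : ∀ x y, G.dist x y ≤ D) :
    (Fintype.card V : ℚ) / 2 ≤
      (∑ k ∈ (Finset.range (D + 1)).filter (fun k => Even k), (alpha G k : ℚ))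
        - ∑ k ∈ (Finset.range (D + 1)).filter (fun k => Odd k), (alpha G k : ℚ) := by
  classical
  set s := A.toFinset
  have hEven : #{p : Sym2 V | Even (pairDist G p)} = (#s + 1).choose 2 + (#sᶜ + 1).choose 2 := by
    rw [filter_even_pairDist_eq_sym2_union hG hbip, card_union_of_disjoint (disjoint_sym2_of_disjoint disjoint_compl_right),
      card_sym2, card_sym2]
  have hTotal : #{p : Sym2 V | Even (pairDist G p)} + #{p : Sym2 V | Odd (pairDist G p)} =
      (#s + #sᶜ + 1).choose 2 := by
    simp only [← Nat.not_even_iff_odd, card_filter_add_card_filter_not, card_univ, Sym2.card,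
      card_add_card_compl]
  rw [← Nat.cast_sum, ← Nat.cast_sum, sum_alpha_filter_eq_card_filter hub,
    sum_alpha_filter_eq_card_filter hub, ← card_add_card_compl s]
  have hOdd := congrArg (Nat.cast : ℕ → ℚ) hTotal
  push_cast at hOdd
  have hineq := add_div_two_le_two_mul_choose_add_choose_sub_choose #s #sᶜ
  rw [← hEven] at hineq
  linarith

/-- In a connected bipartite graph of odd diameter D on n vertices,
the even-distance pair count exceeds the odd-distance pair count by at least n/2. -/
theorem stmt18 {V : Type*} [Fintype V] [DecidableEq V] (G : SimpleGraph V)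
    (hG : G.Connected) (A : Set V)
    (hbip : ∀ x y, G.Adj x y → (x ∈ A ↔ y ∉ A))
    (D : ℕ) (hodd : Odd D)
    (hub : ∀ x y, G.dist x y ≤ D) (hex : ∃ x y, G.dist x y = D) :
    (Fintype.card V : ℚ) / 2 ≤
      (∑ k ∈ (Finset.range (D + 1)).filter (fun k => Even k), (alpha G k : ℚ))
        - ∑ k ∈ (Finset.range (D + 1)).filter (fun k => Odd k), (alpha G k : ℚ) :=
  stmt18_general G hG A hbip D hub
end
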